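/- Strict comparison via the nondecreasing perturbation. Let g be a Carathéodory driver with Lipschitz constant C, let f : ℝ → ℝ be bounded and measurable, and let A : ℝ → ℝ be nondecreasing on [0, T] with A 0 = 0. Let x, y ∈ ℝ with x ≥ y. Let V be a solution of the forward integral equation with data (x, g, f), and let Y : ℝ → ℝ be bounded and measurable with Y t = y − (∫ s in [0, t], g s (Y s) ds) + f t − A t for every t ∈ [0, T]. If ν ∈ [0, T] satisfies A ν > 0, then Y ν < V ν. -/

import Mathlib

open MeasureTheory Set

/-- A bounded measurable real function. -/
def BddMeas (f : ℝ → ℝ) : Prop :=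
  Measurable f ∧ ∃ M : ℝ, ∀ t : ℝ, |f t| ≤ M

/-- A Carathéodory driver with Lipschitz constant `C` on `[0, T]`. -/
def CaratheodoryDriver (T C : ℝ) (g : ℝ → ℝ → ℝ) : Prop :=
  Measurable (Function.uncurry g) ∧
  IntegrableOn (fun s => g s 0) (Icc 0 T) ∧
  ∀ s ∈ Icc (0 : ℝ) T, ∀ y₁ y₂ : ℝ, |g s y₁ - g s y₂| ≤ C * |y₁ - y₂|

/-- A solution of the forward integral equation with data `(x, g, f)`:
a bounded measurable `V` with `V t = x - ∫_{[0,t]} g s (V s) ds + f t` on `[0, T]`. -/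
def IsFwdSolution (T : ℝ) (g : ℝ → ℝ → ℝ) (x : ℝ) (f V : ℝ → ℝ) : Prop :=
  BddMeas V ∧
  ∀ t ∈ Icc (0 : ℝ) T, V t = x - (∫ s in Icc (0 : ℝ) t, g s (V s)) + f t

/-!
With `D = V - Y` and `δ s = g s (V s) - g s (Y s)`, the two equations give
`D t + ∫₀ᵗ δ = (x - y) + A t`, a nondecreasing function of `t`, while `δ ≤ C |D|` by the
Lipschitz bound. If `D` turned negative, then after the last time `τ` at which it was nonnegative
`-D` would satisfy the Grönwall inequality `-D t ≤ C ∫_τ^t (-D)`; hence `D ≥ 0`. If moreover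
`D ν = 0`, monotonicity gives `D t ≤ C ∫_t^ν D` for `t ≤ ν`, so backward Grönwall forces `D = 0` on
`[0, ν]`; then `∫₀^ν δ ≤ 0` and `0 = D ν ≥ (x - y) + A ν > 0`.
-/

open Filter
open scoped Nat

theorem nonpos_of_le_mul_integral_left {w : ℝ → ℝ} {a b B C : ℝ} (hC : 0 ≤ C)
    (hw : IntervalIntegrable w volume a b) (hwB : ∀ t ∈ Icc a b, w t ≤ B)
    (hrec : ∀ t ∈ Icc a b, w t ≤ C * ∫ s in a..t, w s) :
    ∀ t ∈ Icc a b, w t ≤ 0 := by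
  have hiter : ∀ n : ℕ, ∀ t ∈ Icc a b, w t ≤ B * (C * (t - a)) ^ n / n ! := by
    intro n
    induction n with
    | zero => simpa using hwB
    | succ n ih =>
      intro t ht
      calc w t ≤ C * ∫ s in a..t, w s := hrec t ht
        _ ≤ C * ∫ s in a..t, B * (C * (s - a)) ^ n / n ! := by
          gcongr
          exact intervalIntegral.integral_mono_on ht.1
            (hw.mono_set (uIcc_subset_uIcc left_mem_uIcc (mem_uIcc_of_le ht.1 ht.2)))
            (by apply Continuous.intervalIntegrable; fun_prop)
            fun s hs => ih s ⟨hs.1, hs.2.trans ht.2⟩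
        _ = B * (C * (t - a)) ^ (n + 1) / (n + 1)! := by
          simp only [mul_pow, intervalIntegral.integral_div, intervalIntegral.integral_const_mul,
            intervalIntegral.integral_comp_sub_right fun s => s ^ n, integral_pow, sub_self]
          rw [Nat.factorial_succ]
          push_cast
          field_simp
          ring
  intro t ht
  have hlim : Tendsto (fun n : ℕ => B * (C * (t - a)) ^ n / n !) atTop (nhds 0) := by
    simpa [mul_div_assoc] using
      (FloorSemiring.tendsto_pow_div_factorial_atTop (C * (t - a))).const_mul B
  exact ge_of_tendsto' hlim fun n => hiter n t ht

theorem nonpos_of_le_mul_integral_right {w : ℝ → ℝ} {a b B C : ℝ} (hC : 0 ≤ C)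
    (hw : IntervalIntegrable w volume a b) (hwB : ∀ t ∈ Icc a b, w t ≤ B)
    (hrec : ∀ t ∈ Icc a b, w t ≤ C * ∫ s in t..b, w s) :
    ∀ t ∈ Icc a b, w t ≤ 0 := by
  have hrefl := nonpos_of_le_mul_integral_left (w := fun s => w (-s)) (a := -b) (b := -a) hC
    ((IntervalIntegrable.iff_comp_neg (by simp)).1 hw).symm
    (fun t ht => hwB (-t) ⟨le_neg.1 ht.2, neg_le.1 ht.1⟩)
    (fun t ht => by
      simpa [intervalIntegral.integral_comp_neg] using hrec (-t) ⟨le_neg.1 ht.2, neg_le.1 ht.1⟩)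
  intro t ht
  simpa using hrefl (-t) ⟨neg_le_neg ht.2, neg_le_neg ht.1⟩

theorem nonneg_of_monotoneOn_add_integral {D δ : ℝ → ℝ} {a b B C : ℝ} (hC : 0 ≤ C)
    (hD : IntervalIntegrable D volume a b) (hDB : ∀ t ∈ Icc a b, |D t| ≤ B)
    (hδ : IntervalIntegrable δ volume a b) (hδD : ∀ s ∈ Icc a b, δ s ≤ C * |D s|)
    (hmono : MonotoneOn (fun t => D t + ∫ s in a..t, δ s) (Icc a b)) (ha : 0 ≤ D a) :
    ∀ t ∈ Icc a b, 0 ≤ D t := by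
  intro t₀ ht₀
  by_contra! hneg
  set Φ : ℝ → ℝ := fun t => ∫ s in a..t, δ s
  set S : Set ℝ := {t ∈ Icc a t₀ | 0 ≤ D t}
  have haS : a ∈ S := ⟨⟨le_rfl, ht₀.1⟩, ha⟩
  have hSbdd : BddAbove S := ⟨t₀, fun t ht => ht.1.2⟩
  set τ := sSup S
  have haτ : a ≤ τ := le_csSup hSbdd haS
  have hτt₀ : τ ≤ t₀ := csSup_le ⟨a, haS⟩ fun t ht => ht.1.2
  have hτsub : Icc τ t₀ ⊆ Icc a b := Icc_subset_Icc haτ ht₀.2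
  have hτb : τ ∈ Icc a b := hτsub (left_mem_Icc.2 hτt₀)
  have ha_mem : a ∈ Icc a b := left_mem_Icc.2 (ht₀.1.trans ht₀.2)
  have hsub : ∀ {u v}, u ∈ Icc a b → v ∈ Icc a b → uIcc u v ⊆ uIcc a b := fun hu hv =>
    uIcc_subset_uIcc (mem_uIcc_of_le hu.1 hu.2) (mem_uIcc_of_le hv.1 hv.2)
  -- `Φ ≤ D + Φ` on `S`, and `Φ` is continuous, so the bound passes to `τ ∈ closure S`
  have hΦτ : ∀ t ∈ Icc τ t₀, Φ τ ≤ D t + Φ t := by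
    intro t ht
    have hΦ : ContinuousOn Φ (Icc a b) := by
      simpa [uIcc_of_le (ht₀.1.trans ht₀.2)] using
        intervalIntegral.continuousOn_primitive_interval' hδ left_mem_uIcc
    have hclosed := hΦ.preimage_isClosed_of_isClosed isClosed_Icc (isClosed_Iic (a := D t + Φ t))
    refine (closure_minimal (fun t' ht' => ?_) hclosed (csSup_mem_closure ⟨a, haS⟩ hSbdd)).2
    have ht'b : t' ∈ Icc a b := ⟨ht'.1.1, ht'.1.2.trans ht₀.2⟩
    refine ⟨ht'b, ?_⟩
    calc Φ t' ≤ D t' + Φ t' := le_add_of_nonneg_left ht'.2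
      _ ≤ D t + Φ t := hmono ht'b ⟨haτ.trans ht.1, ht.2.trans ht₀.2⟩
          ((le_csSup hSbdd ht').trans ht.1)
  have hDneg : ∀ t ∈ Ioc τ t₀, D t < 0 := fun t ht =>
    not_le.1 fun h => ht.1.not_ge (le_csSup hSbdd ⟨⟨haτ.trans ht.1.le, ht.2⟩, h⟩)
  have hrec : ∀ t ∈ Icc τ t₀, -D t ≤ C * ∫ s in τ..t, -D s := by
    intro t ht
    have hτt : uIcc τ t ⊆ uIcc a b := hsub hτb (hτsub ht)
    calc -D t ≤ Φ t - Φ τ := by linarith [hΦτ t ht]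
      _ = ∫ s in τ..t, δ s :=
          intervalIntegral.integral_interval_sub_left (hδ.mono_set (hsub ha_mem (hτsub ht)))
            (hδ.mono_set (hsub ha_mem hτb))
      _ ≤ ∫ s in τ..t, C * -D s := by
          refine intervalIntegral.integral_mono_on_of_le_Ioo ht.1
            (hδ.mono_set hτt) ((hD.mono_set hτt).neg.const_mul C) fun s hs => ?_
          simpa [abs_of_neg (hDneg s ⟨hs.1, hs.2.le.trans ht.2⟩)] using
            hδD s (hτsub ⟨hs.1.le, hs.2.le.trans ht.2⟩)
      _ = C * ∫ s in τ..t, -D s := intervalIntegral.integral_const_mul _ _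
  have hDt₀ : -D t₀ ≤ 0 := nonpos_of_le_mul_integral_left hC
    (hD.mono_set (hsub hτb ht₀)).neg (fun t ht => (neg_le_abs _).trans (hDB t (hτsub ht))) hrec
    t₀ ⟨hτt₀, le_rfl⟩
  linarith

theorem pos_of_monotoneOn_add_integral {D δ : ℝ → ℝ} {a b B C : ℝ} (hC : 0 ≤ C) (hab : a ≤ b)
    (hD : IntervalIntegrable D volume a b) (hDB : ∀ t ∈ Icc a b, |D t| ≤ B)
    (hδ : IntervalIntegrable δ volume a b) (hδD : ∀ s ∈ Icc a b, δ s ≤ C * |D s|)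
    (hmono : MonotoneOn (fun t => D t + ∫ s in a..t, δ s) (Icc a b)) (ha : 0 ≤ D a)
    (hlt : D a < D b + ∫ s in a..b, δ s) :
    0 < D b := by
  have hnonneg := nonneg_of_monotoneOn_add_integral hC hD hDB hδ hδD hmono ha
  have hδD' : ∀ s ∈ Icc a b, δ s ≤ C * D s := fun s hs => by
    simpa [abs_of_nonneg (hnonneg s hs)] using hδD s hs
  by_contra! hb
  have hsub : ∀ {u}, u ∈ Icc a b → uIcc u b ⊆ uIcc a b := fun hu =>
    uIcc_subset_uIcc (mem_uIcc_of_le hu.1 hu.2) right_mem_uIcc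
  have hsubl : ∀ {u}, u ∈ Icc a b → uIcc a u ⊆ uIcc a b := fun hu =>
    uIcc_subset_uIcc left_mem_uIcc (mem_uIcc_of_le hu.1 hu.2)
  have hzero : ∀ t ∈ Icc a b, D t ≤ 0 := by
    refine nonpos_of_le_mul_integral_right hC hD (fun t ht => (le_abs_self _).trans (hDB t ht))
      fun t ht => ?_
    have hinc : D t + ∫ s in a..t, δ s ≤ D b + ∫ s in a..b, δ s :=
      hmono ht (right_mem_Icc.2 hab) ht.2
    calc D t ≤ ∫ s in t..b, δ s := by
          rw [← intervalIntegral.integral_interval_sub_left hδ (hδ.mono_set (hsubl ht))]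
          linarith
      _ ≤ ∫ s in t..b, C * D s :=
          intervalIntegral.integral_mono_on ht.2 (hδ.mono_set (hsub ht))
            ((hD.mono_set (hsub ht)).const_mul C) fun s hs => hδD' s ⟨ht.1.trans hs.1, hs.2⟩
      _ = C * ∫ s in t..b, D s := intervalIntegral.integral_const_mul _ _
  have hδint : ∫ s in a..b, δ s ≤ 0 := by
    refine (intervalIntegral.integral_mono_on (g := fun _ => 0) hab hδ intervalIntegrable_const
      fun s hs => (hδD' s hs).trans_eq ?_).trans_eq intervalIntegral.integral_zero
    rw [le_antisymm (hzero s hs) (hnonneg s hs), mul_zero]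
  linarith

theorem BddMeas.sub {f g : ℝ → ℝ} (hf : BddMeas f) (hg : BddMeas g) :
    BddMeas fun t => f t - g t := by
  obtain ⟨hfm, M, hM⟩ := hf
  obtain ⟨hgm, N, hN⟩ := hg
  exact ⟨hfm.sub hgm, M + N, fun t => (abs_sub _ _).trans (add_le_add (hM t) (hN t))⟩

theorem BddMeas.integrableOn {f : ℝ → ℝ} (hf : BddMeas f) {s : Set ℝ} (hs : volume s ≠ ⊤) :
    IntegrableOn f s := by
  obtain ⟨hfm, M, hM⟩ := hf
  exact Measure.integrableOn_of_bounded hs hfm.aestronglyMeasurable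
    (Eventually.of_forall fun t => (Real.norm_eq_abs _).trans_le (hM t))

theorem BddMeas.intervalIntegrable {f : ℝ → ℝ} (hf : BddMeas f) (a b : ℝ) :
    IntervalIntegrable f volume a b :=
  (hf.integrableOn (by simp)).intervalIntegrable

theorem CaratheodoryDriver.integrableOn_comp {T C : ℝ} {g : ℝ → ℝ → ℝ}
    (hg : CaratheodoryDriver T C g) {V : ℝ → ℝ} (hV : BddMeas V) :
    IntegrableOn (fun s => g s (V s)) (Icc 0 T) := by
  obtain ⟨hgm, hg0, hgL⟩ := hg
  refine (hg0.abs.add ((hV.integrableOn (by simp)).abs.const_mul C)).mono'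
    (hgm.comp (measurable_id.prodMk hV.1)).aestronglyMeasurable.restrict ?_
  refine (ae_restrict_iff' measurableSet_Icc).2 (Eventually.of_forall fun s hs => ?_)
  have hLip := hgL s hs (V s) 0
  rw [sub_zero] at hLip
  rw [Real.norm_eq_abs, Pi.add_apply]
  linarith [abs_sub_abs_le_abs_sub (g s (V s)) (g s 0)]

theorem forward_eq_strict_comparison_perturbation_general
    (T C : ℝ) (hC : 0 ≤ C)
    (g : ℝ → ℝ → ℝ) (hg : CaratheodoryDriver T C g)
    (f : ℝ → ℝ)
    (A : ℝ → ℝ) (hA : MonotoneOn A (Icc 0 T)) (hA0 : A 0 = 0)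
    (x y : ℝ) (hxy : y ≤ x)
    (V : ℝ → ℝ) (hV : IsFwdSolution T g x f V)
    (Y : ℝ → ℝ) (hY : BddMeas Y)
    (hYeq : ∀ t ∈ Icc (0 : ℝ) T,
      Y t = y - (∫ s in Icc (0 : ℝ) t, g s (Y s)) + f t - A t)
    (ν : ℝ) (hν : ν ∈ Icc (0 : ℝ) T) (hAν : 0 < A ν) :
    Y ν < V ν := by
  obtain ⟨hVb, hVeq⟩ := hV
  set δ : ℝ → ℝ := fun s => g s (V s) - g s (Y s)
  have hδ : IntegrableOn δ (Icc 0 T) := (hg.integrableOn_comp hVb).sub (hg.integrableOn_comp hY)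
  have hsum : ∀ t ∈ Icc 0 T, (V t - Y t) + ∫ s in 0..t, δ s = (x - y) + A t := by
    intro t ht
    have hsub : Icc 0 t ⊆ Icc 0 T := Icc_subset_Icc_right ht.2
    rw [intervalIntegral.integral_of_le ht.1, ← integral_Icc_eq_integral_Ioc,
      integral_sub ((hg.integrableOn_comp hVb).mono_set hsub)
        ((hg.integrableOn_comp hY).mono_set hsub), hVeq t ht, hYeq t ht]
    ring
  have hνT : Icc 0 ν ⊆ Icc 0 T := Icc_subset_Icc_right hν.2
  have h0 := hsum 0 ⟨le_rfl, hν.1.trans hν.2⟩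
  rw [intervalIntegral.integral_same, hA0] at h0
  have hmono : MonotoneOn (fun t => (V t - Y t) + ∫ s in 0..t, δ s) (Icc 0 ν) :=
    fun t ht t' ht' htt' => by
      simp only [hsum t (hνT ht), hsum t' (hνT ht')]
      linarith [hA (hνT ht) (hνT ht') htt']
  obtain ⟨-, B, hB⟩ := hVb.sub hY
  exact sub_pos.1 <| pos_of_monotoneOn_add_integral (D := fun t => V t - Y t) (δ := δ) hC hν.1
    ((hVb.sub hY).intervalIntegrable 0 ν) (fun t _ => hB t)
    ((intervalIntegrable_iff_integrableOn_Icc_of_le hν.1).2 (hδ.mono_set hνT))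
    (fun s hs => (le_abs_self _).trans (hg.2.2 s (hνT hs) _ _)) hmono
    (by linarith) (by linarith [hsum ν hν])

/-- Strict comparison via the nondecreasing perturbation. -/
theorem forward_eq_strict_comparison_perturbation
    (T C : ℝ) (hT : 0 < T) (hC : 0 ≤ C)
    (g : ℝ → ℝ → ℝ) (hg : CaratheodoryDriver T C g)
    (f : ℝ → ℝ) (hf : BddMeas f)
    (A : ℝ → ℝ) (hA : MonotoneOn A (Icc 0 T)) (hA0 : A 0 = 0)
    (x y : ℝ) (hxy : y ≤ x)
    (V : ℝ → ℝ) (hV : IsFwdSolution T g x f V)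
    (Y : ℝ → ℝ) (hY : BddMeas Y)
    (hYeq : ∀ t ∈ Icc (0 : ℝ) T,
      Y t = y - (∫ s in Icc (0 : ℝ) t, g s (Y s)) + f t - A t)
    (ν : ℝ) (hν : ν ∈ Icc (0 : ℝ) T) (hAν : 0 < A ν) :
    Y ν < V ν :=
  forward_eq_strict_comparison_perturbation_general T C hC g hg f A hA hA0 x y hxy V hV Y hY hYeq ν
    hν hAν
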